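/- Let q(x|θ) be, up to normalization, ⊕ₙ αₙ(θ)·bₙ in Bayes space. Then the score satisfies ∂ln q/∂θ = Σₘ (∂αₘ/∂θ)(ln bₘ − E_q[ln bₘ]) and the Fisher information I_θ = Var_ν(∂ln q/∂θ) equals (∂α/∂θ)ᵀ⟨b,b⟩_ν(∂α/∂θ); in particular, when the parameters are the coordinates themselves (θ = α), the Fisher information matrix equals the Gram matrix ⟨b,b⟩ of the basis. -/

import Mathlib

open MeasureTheory Real Finset

noncomputable section

variable {X : Type*} [MeasurableSpace X]

/-- The Bayes-space inner product `⟨p₁,p₂⟩_ν = E_ν[ln p₁ ln p₂] − E_ν[ln p₁]E_ν[ln p₂]`. -/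
def bip (ν : Measure X) (p q : X → ℝ) : ℝ :=
  (∫ x, Real.log (p x) * Real.log (q x) ∂ν) -
    (∫ x, Real.log (p x) ∂ν) * (∫ x, Real.log (q x) ∂ν)

/-- Unnormalized Bayes-space linear combination `⊕ₘ αₘ·bₘ = ∏ₘ bₘ^{αₘ}`. -/
def bayesComb {M : ℕ} (b : Fin M → X → ℝ) (a : Fin M → ℝ) (x : X) : ℝ :=
  ∏ m, b m x ^ a m

/-- Normalization constant. -/
def bayesZ (μ₀ : Measure X) {M : ℕ} (b : Fin M → X → ℝ) (a : Fin M → ℝ) : ℝ :=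
  ∫ x, bayesComb b a x ∂μ₀

/-- The normalized element `q(x|θ) = ∏ₘ bₘ^{αₘ(θ)} / ∫ ∏ₘ bₘ^{αₘ(θ)}`. -/
def bayesQ (μ₀ : Measure X) {M : ℕ} (b : Fin M → X → ℝ) (a : Fin M → ℝ) (x : X) : ℝ :=
  bayesComb b a x / bayesZ μ₀ b a


/-! Up to the log-normaliser, `log q` is linear in `α`, so the score is
`Σₘ α'ₘ log bₘ − Z'/Z`; differentiating under the integral turns `Z'/Z` into
`Σₘ α'ₘ E_q[log bₘ]`. The score is thus a linear combination of the log-basis functions shifted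
by constants, and its `ν`-variance is the quadratic form of their `ν`-covariance matrix, which is
the Bayes-space Gram matrix `⟨bₘ, bₙ⟩_ν`. -/

variable {μ₀ : Measure X} {M : ℕ} {b : Fin M → X → ℝ}

omit [MeasurableSpace X] in
lemma bayesComb_pos (hb : ∀ m x, 0 < b m x) (v : Fin M → ℝ) (x : X) : 0 < bayesComb b v x :=
  prod_pos fun m _ => rpow_pos_of_pos (hb m x) _

omit [MeasurableSpace X] in
lemma log_bayesComb (hb : ∀ m x, 0 < b m x) (v : Fin M → ℝ) (x : X) :
    log (bayesComb b v x) = ∑ m, v m * log (b m x) := by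
  rw [bayesComb, Real.log_prod fun m _ => (rpow_pos_of_pos (hb m x) _).ne']
  exact sum_congr rfl fun m _ => log_rpow (hb m x) _

omit [MeasurableSpace X] in
lemma bayesComb_add (hb : ∀ m x, 0 < b m x) (v w : Fin M → ℝ) (x : X) :
    bayesComb b (v + w) x = bayesComb b v x * bayesComb b w x := by
  simp only [bayesComb, ← prod_mul_distrib, Pi.add_apply, rpow_add (hb _ x)]

omit [MeasurableSpace X] in
lemma bayesComb_single (m : Fin M) (s : ℝ) (x : X) :
    bayesComb b (Pi.single m s) x = b m x ^ s := by
  rw [bayesComb, prod_eq_single m (fun k _ hk => by rw [Pi.single_eq_of_ne hk, rpow_zero])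
    (by simp), Pi.single_eq_same]

lemma integrable_bayesComb (hZpos : ∀ v, 0 < bayesZ μ₀ b v) (v : Fin M → ℝ) :
    Integrable (bayesComb b v) μ₀ := by
  by_contra h
  exact (hZpos v).ne' (integral_undef h)

lemma abs_log_le_add_inv {t : ℝ} (ht : 0 ≤ t) : |log t| ≤ t + t⁻¹ :=
  abs_le.2 ⟨by linarith [neg_inv_le_log ht], by linarith [log_le_self ht, inv_nonneg.2 ht]⟩

/-- Since `|log bₘ| ≤ bₘ + bₘ⁻¹`, the integrand is dominated by the two combinations
with `vₘ` shifted by `±1`. -/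
lemma integrable_log_mul_bayesComb (hb : ∀ m x, 0 < b m x) (hZpos : ∀ v, 0 < bayesZ μ₀ b v)
    (m : Fin M) (v : Fin M → ℝ) :
    Integrable (fun x => log (b m x) * bayesComb b v x) μ₀ := by
  have hshift : ∀ s : ℝ, Integrable (fun x => b m x ^ s * bayesComb b v x) μ₀ := fun s =>
    (integrable_bayesComb hZpos (Pi.single m s + v)).congr
      (ae_of_all _ fun x => by rw [bayesComb_add hb, bayesComb_single])
  have hbm : AEMeasurable (b m) μ₀ :=
    (integrable_bayesComb hZpos (Pi.single m 1)).aemeasurable.congr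
      (ae_of_all _ fun x => by rw [bayesComb_single, rpow_one])
  refine ((hshift 1).add (hshift (-1))).mono
    (hbm.log.aestronglyMeasurable.mul (integrable_bayesComb hZpos v).aestronglyMeasurable)
    (ae_of_all _ fun x => ?_)
  have hc := bayesComb_pos hb v x
  rw [norm_mul, Real.norm_eq_abs, Real.norm_of_nonneg hc.le, Pi.add_apply, rpow_one,
    rpow_neg_one, ← add_mul, Real.norm_of_nonneg (mul_pos (by have := hb m x; positivity) hc).le]
  exact mul_le_mul_of_nonneg_right (abs_log_le_add_inv (hb m x).le) hc.le

lemma integral_sum_mul_log_mul_bayesComb (hb : ∀ m x, 0 < b m x)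
    (hZpos : ∀ v, 0 < bayesZ μ₀ b v) (d v : Fin M → ℝ) :
    ∫ x, (∑ m, d m * log (b m x)) * bayesComb b v x ∂μ₀ =
      ∑ m, d m * ∫ x, log (b m x) * bayesComb b v x ∂μ₀ := by
  simp_rw [sum_mul, mul_assoc]
  rw [integral_finsetSum _ fun m _ => (integrable_log_mul_bayesComb hb hZpos m v).const_mul (d m)]
  simp_rw [integral_const_mul]

lemma integral_log_mul_bayesQ (m : Fin M) (v : Fin M → ℝ) :
    ∫ y, log (b m y) * bayesQ μ₀ b v y ∂μ₀ =
      (∫ y, log (b m y) * bayesComb b v y ∂μ₀) / bayesZ μ₀ b v := by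
  simp_rw [bayesQ, ← mul_div_assoc]
  exact integral_div _ _

lemma log_bayesQ (hb : ∀ m x, 0 < b m x) (hZpos : ∀ v, 0 < bayesZ μ₀ b v) (v : Fin M → ℝ)
    (x : X) : log (bayesQ μ₀ b v x) = ∑ m, v m * log (b m x) - log (bayesZ μ₀ b v) := by
  rw [bayesQ, log_div (bayesComb_pos hb v x).ne' (hZpos v).ne', log_bayesComb hb]

lemma hasDerivAt_log_bayesQ (hb : ∀ m x, 0 < b m x) (hZpos : ∀ v, 0 < bayesZ μ₀ b v)
    {a : ℝ → Fin M → ℝ} {d : Fin M → ℝ} {θ : ℝ} (ha : ∀ m, HasDerivAt (fun t => a t m) (d m) θ)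
    (hZ : HasDerivAt (fun t => bayesZ μ₀ b (a t))
      (∫ x, (∑ m, d m * log (b m x)) * bayesComb b (a θ) x ∂μ₀) θ) (x : X) :
    HasDerivAt (fun t => log (bayesQ μ₀ b (a t) x))
      (∑ m, d m * (log (b m x) - ∫ y, log (b m y) * bayesQ μ₀ b (a θ) y ∂μ₀)) θ := by
  have hlogq : (fun t => log (bayesQ μ₀ b (a t) x)) =
      fun t => ∑ m, a t m * log (b m x) - log (bayesZ μ₀ b (a t)) :=
    funext fun t => log_bayesQ hb hZpos (a t) x
  rw [hlogq]
  refine ((HasDerivAt.fun_sum fun m _ => (ha m).mul_const (log (b m x))).sub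
    (hZ.log (hZpos (a θ)).ne')).congr_deriv ?_
  simp_rw [integral_sum_mul_log_mul_bayesComb hb hZpos, integral_log_mul_bayesQ, mul_sub,
    sum_sub_distrib, sum_div, mul_div_assoc]

lemma hasDerivAt_log_bayesQ_update (hb : ∀ m x, 0 < b m x) (hZpos : ∀ v, 0 < bayesZ μ₀ b v)
    (c : Fin M → ℝ) (k : Fin M)
    (hZ : HasDerivAt (fun t => bayesZ μ₀ b (Function.update c k t))
      (∫ x, log (b k x) * bayesComb b c x ∂μ₀) (c k)) (x : X) :
    HasDerivAt (fun t => log (bayesQ μ₀ b (Function.update c k t) x))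
      (log (b k x) - ∫ y, log (b k y) * bayesQ μ₀ b c y ∂μ₀) (c k) := by
  have hsum : ∀ y, ∑ j, (Pi.single k 1 : Fin M → ℝ) j * log (b j y) = log (b k y) := fun y => by
    simp [Pi.single_apply]
  have h := hasDerivAt_log_bayesQ hb hZpos (hasDerivAt_pi.1 (hasDerivAt_update c k (c k)))
    (by simpa only [hsum, Function.update_eq_self] using hZ) x
  simpa only [Function.update_eq_self, Pi.single_apply, boole_mul, sum_ite_eq', mem_univ,
    if_true] using h

section Covariance

open ProbabilityTheory

variable {Ω : Type*} {mΩ : MeasurableSpace Ω} {μ : Measure Ω} [IsProbabilityMeasure μ]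

lemma integral_mul_sub_integral_mul_integral {f g : Ω → ℝ} (hf : MemLp f 2 μ)
    (hg : MemLp g 2 μ) :
    (∫ x, f x * g x ∂μ) - (∫ x, f x ∂μ) * (∫ x, g x ∂μ) = cov[f, g; μ] :=
  (covariance_eq_sub hf hg).symm

lemma integral_mul_sub_integral_mul_integral_sub_const {f g : Ω → ℝ} (hf : MemLp f 2 μ)
    (hg : MemLp g 2 μ) (a a' : ℝ) :
    (∫ x, (f x - a) * (g x - a') ∂μ) - (∫ x, f x - a ∂μ) * (∫ x, g x - a' ∂μ) = cov[f, g; μ] := by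
  have hfa : MemLp (fun x => f x - a) 2 μ := hf.sub (memLp_const a)
  have hga : MemLp (fun x => g x - a') 2 μ := hg.sub (memLp_const a')
  rw [integral_mul_sub_integral_mul_integral hfa hga,
    covariance_sub_const_left (hf.integrable one_le_two),
    covariance_sub_const_right (hg.integrable one_le_two)]

lemma integral_sq_sub_sq_integral_sum_mul_sub_const {ι : Type*} [Fintype ι] {f : ι → Ω → ℝ}
    (hf : ∀ i, MemLp (f i) 2 μ) (d c : ι → ℝ) :
    (∫ x, (∑ i, d i * (f i x - c i)) ^ 2 ∂μ) - (∫ x, ∑ i, d i * (f i x - c i) ∂μ) ^ 2 =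
      ∑ i, ∑ j, d i * d j * cov[f i, f j; μ] := by
  have hg : ∀ i, MemLp (fun x => d i * (f i x - c i)) 2 μ := fun i =>
    ((hf i).sub (memLp_const _)).const_mul _
  have hsum := memLp_finsetSum univ fun i _ => hg i
  simp_rw [sq]
  rw [integral_mul_sub_integral_mul_integral hsum hsum, covariance_fun_sum_fun_sum hg hg]
  simp only [covariance_const_mul_left, covariance_const_mul_right,
    covariance_sub_const_left ((hf _).integrable one_le_two),
    covariance_sub_const_right ((hf _).integrable one_le_two)]
  exact sum_congr rfl fun i _ => sum_congr rfl fun j _ => by ring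

lemma bip_eq_covariance {p q : Ω → ℝ} (hp : MemLp (fun x => log (p x)) 2 μ)
    (hq : MemLp (fun x => log (q x)) 2 μ) :
    bip μ p q = cov[fun x => log (p x), fun x => log (q x); μ] :=
  integral_mul_sub_integral_mul_integral hp hq

end Covariance

/-- **Score and Fisher information in Bayes space.**  For `q(x|θ)` the normalized Bayes-space
combination `⊕ₘ αₘ(θ)·bₘ`: (i) the score is
`∂ln q/∂θ = Σₘ (∂αₘ/∂θ)(ln bₘ − E_q[ln bₘ])`; (ii) the Fisher information
`I_θ = Var_ν(∂ln q/∂θ)` equals `(∂α/∂θ)ᵀ⟨b,b⟩_ν(∂α/∂θ)`; and (iii) when the parameters are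
the coordinates themselves, the Fisher information matrix equals the Gram matrix `⟨b,b⟩`
of the basis.  (The hypotheses `hZ`, `hZc` state that differentiation may be interchanged
with the normalization integral.) -/
theorem score_and_fisher_information (μ₀ : Measure X) (ν : Measure X) [IsProbabilityMeasure ν]
    {M : ℕ} (b : Fin M → X → ℝ) (hb : ∀ m x, 0 < b m x)
    (α : ℝ → Fin M → ℝ) (hα : ∀ m, Differentiable ℝ fun t => α t m) (θ : ℝ)
    (hZpos : ∀ v : Fin M → ℝ, 0 < bayesZ μ₀ b v)
    (hZ : HasDerivAt (fun t => bayesZ μ₀ b (α t))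
      (∫ x, (∑ m, deriv (fun s => α s m) θ * Real.log (b m x)) * bayesComb b (α θ) x ∂μ₀) θ)
    (hL2 : ∀ m, MemLp (fun x => Real.log (b m x)) 2 ν)
    (c : Fin M → ℝ)
    (hZc : ∀ n : Fin M, HasDerivAt (fun t => bayesZ μ₀ b (Function.update c n t))
      (∫ x, Real.log (b n x) * bayesComb b c x ∂μ₀) (c n)) :
    (∀ x, deriv (fun t => Real.log (bayesQ μ₀ b (α t) x)) θ =
      ∑ m, deriv (fun s => α s m) θ *
        (Real.log (b m x) - ∫ y, Real.log (b m y) * bayesQ μ₀ b (α θ) y ∂μ₀)) ∧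
    ((∫ x, (deriv (fun t => Real.log (bayesQ μ₀ b (α t) x)) θ) ^ 2 ∂ν) -
        (∫ x, deriv (fun t => Real.log (bayesQ μ₀ b (α t) x)) θ ∂ν) ^ 2 =
      ∑ m, ∑ n, deriv (fun s => α s m) θ * deriv (fun s => α s n) θ * bip ν (b m) (b n)) ∧
    (∀ m n : Fin M,
      (∫ x, deriv (fun t => Real.log (bayesQ μ₀ b (Function.update c m t) x)) (c m) *
          deriv (fun t => Real.log (bayesQ μ₀ b (Function.update c n t) x)) (c n) ∂ν) -
        (∫ x, deriv (fun t => Real.log (bayesQ μ₀ b (Function.update c m t) x)) (c m) ∂ν) *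
          (∫ x, deriv (fun t => Real.log (bayesQ μ₀ b (Function.update c n t) x)) (c n) ∂ν) =
      bip ν (b m) (b n)) := by
  have hscore : ∀ x, deriv (fun t => log (bayesQ μ₀ b (α t) x)) θ =
      ∑ m, deriv (fun s => α s m) θ * (log (b m x) - ∫ y, log (b m y) * bayesQ μ₀ b (α θ) y ∂μ₀) :=
    fun x => (hasDerivAt_log_bayesQ hb hZpos (fun m => (hα m θ).hasDerivAt) hZ x).deriv
  have hcoord : ∀ k x, deriv (fun t => log (bayesQ μ₀ b (Function.update c k t) x)) (c k) =
      log (b k x) - ∫ y, log (b k y) * bayesQ μ₀ b c y ∂μ₀ :=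
    fun k x => (hasDerivAt_log_bayesQ_update hb hZpos c k (hZc k) x).deriv
  refine ⟨hscore, ?_, fun m n => ?_⟩
  · simp_rw [hscore]
    rw [integral_sq_sub_sq_integral_sum_mul_sub_const hL2]
    simp_rw [bip_eq_covariance (hL2 _) (hL2 _)]
  · simp_rw [hcoord]
    rw [integral_mul_sub_integral_mul_integral_sub_const (hL2 m) (hL2 n),
      bip_eq_covariance (hL2 m) (hL2 n)]
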